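/- Define the 2×2 real matrices A* = [[1/2, 1], [0, 0]] and B* = [[0, 0], [1, 0]], the initial state x₀ = (1/2, 0) ∈ ℝ², and the action u₀ = (1, 0) ∈ ℝ². Then: (i) the next state x₁ = A* x₀ + B* u₀ equals (1/4, 1), so its first coordinate satisfies x₁₁ ≤ 1 (the action u₀ is one-step safe for the safety threshold s₁ = 1); but (ii) for every action u₁ = (u₁₁, u₁₂) ∈ ℝ², the first coordinate of A* x₁ + B* u₁ equals 9/8 > 1, i.e., no action taken from x₁ is safe. -/
import Mathlib

open Matrix

/-- The paper's example showing one-step safety is insufficient: with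
`A* = [[1/2, 1], [0, 0]]`, `B* = [[0, 0], [1, 0]]`, `x₀ = (1/2, 0)`,
`u₀ = (1, 0)`, the next state `x₁ = A* x₀ + B* u₀ = (1/4, 1)` is safe
(`x₁₁ ≤ 1`), but for every action `u₁`, the first coordinate of
`A* x₁ + B* u₁` equals `9/8 > 1`, so no action from `x₁` is safe. -/
theorem stmt15 :
    let A : Matrix (Fin 2) (Fin 2) ℝ := !![1/2, 1; 0, 0]
    let B : Matrix (Fin 2) (Fin 2) ℝ := !![0, 0; 1, 0]
    let x₀ : Fin 2 → ℝ := ![1/2, 0]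
    let u₀ : Fin 2 → ℝ := ![1, 0]
    let x₁ : Fin 2 → ℝ := A.mulVec x₀ + B.mulVec u₀
    (x₁ = ![1/4, 1] ∧ x₁ 0 ≤ 1) ∧
    (∀ u₁ : Fin 2 → ℝ, (A.mulVec x₁ + B.mulVec u₁) 0 = 9/8 ∧ (1 : ℝ) < 9/8) := by
  intro A B x₀ u₀ x₁
  refine ⟨⟨?_, ?_⟩, fun u₁ => ⟨?_, by norm_num⟩⟩ <;>
    simp [A, B, x₀, u₀, x₁, mulVec, dotProduct, Fin.sum_univ_two, funext_iff, Fin.forall_fin_two] <;>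
    norm_num
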